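/- arXiv:2110.11775 — 3 statements merged into one kernel-verified Lean document; each statement's English description precedes it below -/
import Mathlib

section
/- Lemma 1 (KKT relation, interior case): Let M, Γ, S, c, a be real numbers with M > 0 and c > 0, and let x, y, λ, υ be nonnegative real numbers satisfying the KKT conditions: −1 + x − y + (λ − υ)·M = 0; x·(a − 1) = 0; y·a = 0; λ·(S/c − Γ + M·(a − 1)) = 0; and υ·(Γ − M·a − S/c) = 0. If 0 < a < 1, then λ > 0, υ = 0, and S/c = Γ + M·(1 − a). -/
/-!
Since `0 < a < 1`, the multipliers `x` and `y` of the box constraints vanish, so stationarity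
reads `(λ - υ) M = 1`. The two big-M deadline constraints have values summing to `-M ≠ 0`,
so they cannot both be active and one of `λ`, `υ` is zero; `λ = 0` would force `υ M = -1 < 0`.
Hence `υ = 0`, `λ = M⁻¹ > 0`, and the `λ`-constraint is active.
-/

theorem eq_zero_or_eq_zero_of_mul_eq_zero_of_add_ne_zero {R : Type*}
    [NonUnitalNonAssocSemiring R] [NoZeroDivisors R] {p q g h : R}
    (hpg : p * g = 0) (hqh : q * h = 0) (hgh : g + h ≠ 0) : p = 0 ∨ q = 0 := by
  by_contra! hpq
  have hg : g = 0 := (mul_eq_zero.1 hpg).resolve_left hpq.1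
  have hh : h = 0 := (mul_eq_zero.1 hqh).resolve_left hpq.2
  exact hgh (by rw [hg, hh, add_zero])

theorem kkt_interior_case_general
    (M Γ S c a x y lam υ : ℝ)
    (hM : 0 < M) (hυ : 0 ≤ υ)
    (hstat : -1 + x - y + (lam - υ) * M = 0)
    (hcs_x : x * (a - 1) = 0)
    (hcs_y : y * a = 0)
    (hcs_lam : lam * (S / c - Γ + M * (a - 1)) = 0)
    (hcs_υ : υ * (Γ - M * a - S / c) = 0)
    (ha0 : 0 < a) (ha1 : a < 1) :
    0 < lam ∧ υ = 0 ∧ S / c = Γ + M * (1 - a) := by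
  have hx0 : x = 0 := (mul_eq_zero.1 hcs_x).resolve_right (sub_ne_zero.2 ha1.ne)
  have hy0 : y = 0 := (mul_eq_zero.1 hcs_y).resolve_right ha0.ne'
  have hgap : (lam - υ) * M = 1 := by rw [hx0, hy0] at hstat; linarith
  have hυ0 : υ = 0 := by
    have hsum : (S / c - Γ + M * (a - 1)) + (Γ - M * a - S / c) = -M := by ring
    rcases eq_zero_or_eq_zero_of_mul_eq_zero_of_add_ne_zero hcs_lam hcs_υ
        (hsum ▸ neg_ne_zero.2 hM.ne') with hlam0 | hυ0
    · rw [hlam0] at hgap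
      linarith [mul_nonneg hυ hM.le]
    · exact hυ0
  have hlam : lam = M⁻¹ := eq_inv_of_mul_eq_one_left (by rwa [hυ0, sub_zero] at hgap)
  have hlam_pos : 0 < lam := hlam ▸ inv_pos.2 hM
  have hactive := (mul_eq_zero.1 hcs_lam).resolve_left hlam_pos.ne'
  exact ⟨hlam_pos, hυ0, by linarith⟩

/-- Lemma 1 (KKT relation, interior case). -/
theorem kkt_interior_case
    (M Γ S c a x y lam υ : ℝ)
    (hM : 0 < M) (hc : 0 < c)
    (hx : 0 ≤ x) (hy : 0 ≤ y) (hlam : 0 ≤ lam) (hυ : 0 ≤ υ)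
    (hstat : -1 + x - y + (lam - υ) * M = 0)
    (hcs_x : x * (a - 1) = 0)
    (hcs_y : y * a = 0)
    (hcs_lam : lam * (S / c - Γ + M * (a - 1)) = 0)
    (hcs_υ : υ * (Γ - M * a - S / c) = 0)
    (ha0 : 0 < a) (ha1 : a < 1) :
    0 < lam ∧ υ = 0 ∧ S / c = Γ + M * (1 - a) :=
  kkt_interior_case_general M Γ S c a x y lam υ hM hυ hstat hcs_x hcs_y hcs_lam hcs_υ ha0 ha1
end

section
/- Lemma 1 (KKT relation, case a = 0): Let M, Γ, S, c be real numbers with M > 0 and c > 0, and let x, y, λ, υ be nonnegative real numbers satisfying the KKT conditions with a = 0: −1 + x − y + (λ − υ)·M = 0; x·(0 − 1) = 0; λ·(S/c − Γ + M·(0 − 1)) = 0; and υ·(Γ − S/c) = 0. Then x = 0, λ > 0, and S/c = Γ + M. -/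
theorem kkt_case_a_zero_general
    (M Γ S c x y lam υ : ℝ)
    (hM : 0 < M)
    (hy : 0 ≤ y) (hυ : 0 ≤ υ)
    (hstat : -1 + x - y + (lam - υ) * M = 0)
    (hcs_x : x * ((0 : ℝ) - 1) = 0)
    (hcs_lam : lam * (S / c - Γ + M * ((0 : ℝ) - 1)) = 0) :
    x = 0 ∧ 0 < lam ∧ S / c = Γ + M := by
  have hx0 : x = 0 := by linarith
  have hgap : 0 < (lam - υ) * M := by linarith
  have hlam : 0 < lam := by linarith [pos_of_mul_pos_left hgap hM.le]
  have hactive : S / c - Γ + M * ((0 : ℝ) - 1) = 0 :=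
    (mul_eq_zero.mp hcs_lam).resolve_left hlam.ne'
  exact ⟨hx0, hlam, by linarith⟩

/-- Lemma 1 (KKT relation, case a = 0). -/
theorem kkt_case_a_zero
    (M Γ S c x y lam υ : ℝ)
    (hM : 0 < M) (hc : 0 < c)
    (hx : 0 ≤ x) (hy : 0 ≤ y) (hlam : 0 ≤ lam) (hυ : 0 ≤ υ)
    (hstat : -1 + x - y + (lam - υ) * M = 0)
    (hcs_x : x * ((0 : ℝ) - 1) = 0)
    (hcs_lam : lam * (S / c - Γ + M * ((0 : ℝ) - 1)) = 0)
    (hcs_υ : υ * (Γ - S / c) = 0) :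
    x = 0 ∧ 0 < lam ∧ S / c = Γ + M :=
  kkt_case_a_zero_general M Γ S c x y lam υ hM hy hυ hstat hcs_x hcs_lam
end

section
/- Lemma 4 (CEFL descent): Let E be a complete real inner product space, I a finite index set, and f_i : E → ℝ differentiable functions for i ∈ I. Let α_i ≥ 0 with ∑_{i∈I} α_i = 1, set f = ∑_{i∈I} α_i f_i, and assume ∇f is Lipschitz continuous with constant L > 0. Fix w ∈ E, a subset S ⊆ I, and points w̃_i ∈ E for i ∈ S, and define the CEFL update w⁺ = w − (1/L)·(∑_{i∈S} α_i ∇f_i(w̃_i) + ∑_{i∈I∖S} α_i ∇f_i(w)). Then f(w⁺) ≤ f(w) − (1/(2L))·‖∇f(w)‖² + (1/(2L))·‖∑_{i∈S} α_i (∇f_i(w̃_i) − ∇f_i(w))‖². -/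
/-!
Write `G = ∇f(w)` and `e = ∑_{i∈S} α_i (∇f_i(w̃_i) - ∇f_i(w))`. Since `S ⊆ I`, the aggregated
direction of the CEFL update is exactly `G + e`, so the update is an inexact gradient step
`w⁺ = w - (G + e)/L`. The descent lemma `f y ≤ f x + ⟪∇f x, y - x⟫ + L/2 ‖y - x‖²` (obtained by
integrating the Lipschitz bound on `∇f` along the segment) then gives
`f w⁺ ≤ f w - ⟪G, G + e⟫/L + ‖G + e‖²/(2L) = f w - ‖G‖²/(2L) + ‖e‖²/(2L)`.
-/

open Finset RealInnerProductSpace NNReal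

theorem Finset.sum_add_sum_sdiff_eq_sum_add_sum_sub {ι M : Type*} [DecidableEq ι]
    [AddCommGroup M] {I S : Finset ι} (hS : S ⊆ I) (a b : ι → M) :
    ∑ i ∈ S, a i + ∑ i ∈ I \ S, b i = ∑ i ∈ I, b i + ∑ i ∈ S, (a i - b i) := by
  rw [sum_sub_distrib, ← sum_sdiff hS]
  abel

theorem LipschitzWith.inner_sub_le {E : Type*} [NormedAddCommGroup E] [InnerProductSpace ℝ E]
    {g : E → E} {K : ℝ≥0} (hg : LipschitzWith K g) (x v : E) {t : ℝ} (ht : 0 ≤ t) :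
    ⟪g (x + t • v) - g x, v⟫ ≤ K * t * ‖v‖ ^ 2 :=
  calc ⟪g (x + t • v) - g x, v⟫ ≤ ‖g (x + t • v) - g x‖ * ‖v‖ := real_inner_le_norm _ _
    _ ≤ K * ‖t • v‖ * ‖v‖ := by
        gcongr
        simpa [dist_eq_norm] using hg.dist_le_mul (x + t • v) x
    _ = K * t * ‖v‖ ^ 2 := by rw [norm_smul, Real.norm_of_nonneg ht]; ring

section

variable {E : Type*} [NormedAddCommGroup E] [InnerProductSpace ℝ E] [CompleteSpace E]

theorem HasGradientAt.const_mul {f : E → ℝ} {f' x : E} (h : HasGradientAt f f' x) (c : ℝ) :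
    HasGradientAt (fun y => c * f y) (c • f') x := by
  rw [hasGradientAt_iff_hasFDerivAt, map_smul]
  exact h.hasFDerivAt.const_mul c

theorem HasGradientAt.fun_sum {ι : Type*} {s : Finset ι} {f : ι → E → ℝ} {f' : ι → E} {x : E}
    (h : ∀ i ∈ s, HasGradientAt (f i) (f' i) x) :
    HasGradientAt (fun y => ∑ i ∈ s, f i y) (∑ i ∈ s, f' i) x := by
  rw [hasGradientAt_iff_hasFDerivAt, map_sum]
  exact HasFDerivAt.fun_sum fun i hi => (h i hi).hasFDerivAt

theorem HasGradientAt.hasDerivAt_comp_add_smul {f : E → ℝ} {f' x v : E} {t : ℝ}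
    (h : HasGradientAt f f' (x + t • v)) :
    HasDerivAt (fun s : ℝ => f (x + s • v)) ⟪f', v⟫ t := by
  have hline : HasDerivAt (fun s : ℝ => x + s • v) v t := by
    simpa using ((hasDerivAt_id t).smul_const v).const_add x
  have hcomp := h.hasFDerivAt.comp_hasDerivAt t hline
  simp only [InnerProductSpace.toDual_apply_apply] at hcomp
  exact hcomp

theorem le_add_inner_add_sq_of_lipschitzWith_gradient {f : E → ℝ} {g : E → E} {K : ℝ≥0}
    (hf : ∀ x, HasGradientAt f (g x) x) (hg : LipschitzWith K g) (x y : E) :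
    f y ≤ f x + ⟪g x, y - x⟫ + K / 2 * ‖y - x‖ ^ 2 := by
  set v := y - x
  have hφ (t : ℝ) : HasDerivAt (fun s : ℝ => f (x + s • v)) ⟪g (x + t • v), v⟫ t :=
    (hf _).hasDerivAt_comp_add_smul
  have hB (t : ℝ) : HasDerivAt (fun s : ℝ => f x + s * ⟪g x, v⟫ + K / 2 * s ^ 2 * ‖v‖ ^ 2)
      (⟪g x, v⟫ + K * t * ‖v‖ ^ 2) t := by
    have hlin := ((hasDerivAt_id' t).mul_const ⟪g x, v⟫).const_add (f x)
    have hquad := ((hasDerivAt_pow 2 t).const_mul (K / 2 : ℝ)).mul_const (‖v‖ ^ 2)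
    exact (hlin.fun_add hquad).congr_deriv (by push_cast; ring)
  have hslope (t : ℝ) (ht : 0 ≤ t) : ⟪g (x + t • v), v⟫ ≤ ⟪g x, v⟫ + K * t * ‖v‖ ^ 2 := by
    have := hg.inner_sub_le x v ht
    rw [inner_sub_left] at this
    linarith
  have hbound := image_le_of_deriv_right_le_deriv_boundary (a := 0) (b := 1)
    (fun t _ => (hφ t).continuousAt.continuousWithinAt) (fun t _ => (hφ t).hasDerivWithinAt)
    (by simp) (fun t _ => (hB t).continuousAt.continuousWithinAt)
    (fun t _ => (hB t).hasDerivWithinAt) (fun t ht => hslope t ht.1)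
    (Set.right_mem_Icc.2 zero_le_one)
  simpa [v] using hbound

theorem le_sub_sq_add_sq_of_inexact_gradient_step {f : E → ℝ} {g : E → E} {L : ℝ} (hL : 0 < L)
    (hf : ∀ x, HasGradientAt f (g x) x) (hg : LipschitzWith (Real.toNNReal L) g) (x e : E) :
    f (x - (1 / L) • (g x + e)) ≤
      f x - 1 / (2 * L) * ‖g x‖ ^ 2 + 1 / (2 * L) * ‖e‖ ^ 2 := by
  have hdescent :=
    le_add_inner_add_sq_of_lipschitzWith_gradient hf hg x (x - (1 / L) • (g x + e))
  rw [Real.coe_toNNReal L hL.le, sub_sub_cancel_left, inner_neg_right, norm_neg,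
    real_inner_smul_right, norm_smul, Real.norm_of_nonneg (by positivity), inner_add_right,
    real_inner_self_eq_norm_sq, mul_pow, norm_add_sq_real] at hdescent
  convert hdescent using 1
  field_simp
  ring

end

theorem cefl_descent_general
    {E : Type*} [NormedAddCommGroup E] [InnerProductSpace ℝ E] [CompleteSpace E]
    {ι : Type*} [DecidableEq ι] (I : Finset ι) (fi : ι → E → ℝ) (fi' : ι → E → E)
    (α : ι → ℝ)
    (hgrad : ∀ i ∈ I, ∀ x : E, HasGradientAt (fi i) (fi' i x) x)
    (L : ℝ) (hL : 0 < L)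
    (hlip : LipschitzWith (Real.toNNReal L) (fun x : E => ∑ i ∈ I, α i • fi' i x))
    (w : E) (S : Finset ι) (hS : S ⊆ I) (wt : ι → E) :
    (∑ i ∈ I, α i * fi i
        (w - (1 / L) • (∑ i ∈ S, α i • fi' i (wt i) + ∑ i ∈ I \ S, α i • fi' i w))) ≤
      (∑ i ∈ I, α i * fi i w)
        - (1 / (2 * L)) * ‖∑ i ∈ I, α i • fi' i w‖ ^ 2
        + (1 / (2 * L)) * ‖∑ i ∈ S, α i • (fi' i (wt i) - fi' i w)‖ ^ 2 := by
  have hf (x : E) :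
      HasGradientAt (fun y => ∑ i ∈ I, α i * fi i y) (∑ i ∈ I, α i • fi' i x) x :=
    HasGradientAt.fun_sum fun i hi => (hgrad i hi x).const_mul (α i)
  simp_rw [smul_sub]
  rw [sum_add_sum_sdiff_eq_sum_add_sum_sub hS]
  exact le_sub_sq_add_sq_of_inexact_gradient_step hL hf hlip w _

/-- Lemma 4 (CEFL descent): the CEFL update, which mixes stale gradients from the
clients in `S` with fresh gradients from the remaining clients, yields a descent
bounded by the staleness error. -/
theorem cefl_descent
    {E : Type*} [NormedAddCommGroup E] [InnerProductSpace ℝ E] [CompleteSpace E]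
    {ι : Type*} [DecidableEq ι] (I : Finset ι) (fi : ι → E → ℝ) (fi' : ι → E → E)
    (α : ι → ℝ) (hα : ∀ i ∈ I, 0 ≤ α i) (hαsum : ∑ i ∈ I, α i = 1)
    (hgrad : ∀ i ∈ I, ∀ x : E, HasGradientAt (fi i) (fi' i x) x)
    (L : ℝ) (hL : 0 < L)
    (hlip : LipschitzWith (Real.toNNReal L) (fun x : E => ∑ i ∈ I, α i • fi' i x))
    (w : E) (S : Finset ι) (hS : S ⊆ I) (wt : ι → E) :
    (∑ i ∈ I, α i * fi i
        (w - (1 / L) • (∑ i ∈ S, α i • fi' i (wt i) + ∑ i ∈ I \ S, α i • fi' i w))) ≤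
      (∑ i ∈ I, α i * fi i w)
        - (1 / (2 * L)) * ‖∑ i ∈ I, α i • fi' i w‖ ^ 2
        + (1 / (2 * L)) * ‖∑ i ∈ S, α i • (fi' i (wt i) - fi' i w)‖ ^ 2 :=
  cefl_descent_general I fi fi' α hgrad L hL hlip w S hS wt
end
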